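/- Let c > 0, p > 1, f differentiable on an open interval containing [a, a+c] with integrable derivative, and suppose A, B ≥ 0 satisfy |f'(a+tc)|^{p/(p-1)} ≤ (1-t)·A^{p/(p-1)} + t·B^{p/(p-1)} for all t ∈ [0,1]. Then |(1/c) ∫_a^{a+c} f(x) dx − (f(a)+f(a+c))/2| ≤ (c/(2(p+1)^{1/p})) · ((A^{p/(p-1)} + B^{p/(p-1)})/2)^{(p-1)/p}. -/

import Mathlib

/-! Integration by parts writes the trapezoid error as `-(1/c) ∫ (x - m) f'(x) dx`, with `m` the
midpoint of `[a, a + c]`. Hölder's inequality with `q = p/(p-1)` splits this into the `L^p` norm of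
`x - m`, which is computed exactly, and the `L^q` norm of `f'`, which is controlled by integrating
the hypothesis: the average over `[0, 1]` of `(1 - t) A^q + t B^q` is `(A^q + B^q)/2`. -/

open MeasureTheory intervalIntegral Set

theorem integral_abs_rpow_symm {d p : ℝ} (hd : 0 ≤ d) (hp : 0 ≤ p) :
    ∫ x in -d..d, |x| ^ p = 2 * (d ^ (p + 1) / (p + 1)) := by
  have hcont : ∀ s t : ℝ, IntervalIntegrable (fun x : ℝ => |x| ^ p) volume s t := fun s t =>
    (continuous_abs.rpow_const fun _ => Or.inr hp).intervalIntegrable s t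
  have hhalf : ∫ x in (0 : ℝ)..d, |x| ^ p = d ^ (p + 1) / (p + 1) := by
    rw [integral_congr fun x hx => by rw [abs_of_nonneg (uIcc_of_le hd ▸ hx).1],
      integral_rpow (Or.inl (by linarith)), Real.zero_rpow (by linarith), sub_zero]
  rw [← integral_add_adjacent_intervals (hcont _ 0) (hcont 0 _), two_mul, ← hhalf]
  congr 1
  simpa using (integral_comp_neg (a := 0) (b := d) fun x : ℝ => |x| ^ p).symm

theorem integral_abs_sub_midpoint_rpow {a b p : ℝ} (hab : a ≤ b) (hp : 0 ≤ p) :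
    ∫ x in a..b, |x - (a + b) / 2| ^ p = (b - a) ^ (p + 1) / (2 ^ p * (p + 1)) := by
  rw [integral_comp_sub_right (fun x => |x| ^ p), show a - (a + b) / 2 = -((b - a) / 2) by ring,
    show b - (a + b) / 2 = (b - a) / 2 by ring,
    integral_abs_rpow_symm (by linarith) hp, Real.div_rpow (by linarith) zero_le_two,
    Real.rpow_add_one two_ne_zero]
  have : (0:ℝ) < 2 ^ p := by positivity
  have : (0:ℝ) < p + 1 := by linarith
  field_simp

theorem integral_sub_midpoint_mul_deriv {f f' : ℝ → ℝ} {a b : ℝ}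
    (hf : ∀ x ∈ uIcc a b, HasDerivAt f (f' x) x) (hf' : IntervalIntegrable f' volume a b) :
    ∫ x in a..b, (x - (a + b) / 2) * f' x = (b - a) / 2 * (f a + f b) - ∫ x in a..b, f x := by
  rw [integral_mul_deriv_eq_deriv_mul (u := fun x => x - (a + b) / 2) (u' := fun _ => 1)
    (fun x _ => (hasDerivAt_id x).sub_const _) hf
    intervalIntegrable_const hf']
  simp only [one_mul]
  ring

theorem abs_intervalIntegral_mul_le_Lp_mul_Lq {a b p q : ℝ} (hab : a ≤ b)
    (hpq : p.HolderConjugate q) {g h : ℝ → ℝ}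
    (hg : MemLp g (ENNReal.ofReal p) (volume.restrict (Ioc a b)))
    (hh : MemLp h (ENNReal.ofReal q) (volume.restrict (Ioc a b))) :
    |∫ x in a..b, g x * h x| ≤
      (∫ x in a..b, |g x| ^ p) ^ (1 / p) * (∫ x in a..b, |h x| ^ q) ^ (1 / q) := by
  simp only [integral_of_le hab]
  rw [← Real.norm_eq_abs]
  calc ‖∫ x in Ioc a b, g x * h x‖ ≤ ∫ x in Ioc a b, ‖g x‖ * ‖h x‖ := by
        simpa only [norm_mul] using norm_integral_le_integral_norm (fun x => g x * h x)
    _ ≤ _ := integral_mul_norm_le_Lp_mul_Lq hpq hg hh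

theorem memLp_sub_const_restrict_Ioc (a b m : ℝ) (p : ENNReal) :
    MemLp (fun x : ℝ => x - m) p (volume.restrict (Ioc a b)) := by
  have hmono : MonotoneOn (fun x : ℝ => x - m) (Icc a b) := fun _ _ _ _ h => sub_le_sub_right h m
  exact (hmono.memLp_isCompact isCompact_Icc).mono_measure
    (Measure.restrict_mono Ioc_subset_Icc_self le_rfl)

theorem MeasureTheory.MemLp.intervalIntegrable_abs_rpow {g : ℝ → ℝ} {a b q : ℝ}
    (hab : a ≤ b) (hq : 0 < q) (hg : MemLp g (ENNReal.ofReal q) (volume.restrict (Ioc a b))) :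
    IntervalIntegrable (fun x => |g x| ^ q) volume a b := by
  rw [intervalIntegrable_iff_integrableOn_Ioc_of_le hab, IntegrableOn]
  simpa [ENNReal.toReal_ofReal hq.le] using
    hg.integrable_norm_rpow (by simpa using hq) ENNReal.ofReal_ne_top

theorem abs_le_max_of_rpow_abs_le_convexComb {g : ℝ → ℝ} {a c A B q : ℝ} (hc : 0 < c)
    (hA : 0 ≤ A) (hB : 0 ≤ B) (hq : 0 < q)
    (hg : ∀ t ∈ Icc (0 : ℝ) 1, |g (a + t * c)| ^ q ≤ (1 - t) * A ^ q + t * B ^ q) :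
    ∀ x ∈ Icc a (a + c), |g x| ≤ max A B := by
  intro x hx
  have ht : (x - a) / c ∈ Icc (0 : ℝ) 1 :=
    ⟨div_nonneg (by linarith [hx.1]) hc.le, (div_le_one hc).2 (by linarith [hx.2])⟩
  have hgx := hg _ ht
  rw [div_mul_cancel₀ _ hc.ne', add_sub_cancel] at hgx
  have hAM : A ^ q ≤ max A B ^ q := Real.rpow_le_rpow hA (le_max_left A B) hq.le
  have hBM : B ^ q ≤ max A B ^ q := Real.rpow_le_rpow hB (le_max_right A B) hq.le
  refine (Real.rpow_le_rpow_iff (abs_nonneg _) (hA.trans (le_max_left A B)) hq).1 (hgx.trans ?_)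
  nlinarith [ht.1, ht.2]

theorem integral_le_of_le_convexComb {g : ℝ → ℝ} {a c U V : ℝ} (hc : 0 < c)
    (hg : IntervalIntegrable g volume a (a + c))
    (hle : ∀ t ∈ Icc (0 : ℝ) 1, g (a + t * c) ≤ (1 - t) * U + t * V) :
    ∫ x in a..a + c, g x ≤ c * ((U + V) / 2) := by
  have hsub : ∫ x in a..a + c, g x = c * ∫ t in (0:ℝ)..1, g (c * t + a) := by
    simp [add_comm]
  have hgt : IntervalIntegrable (fun t => g (c * t + a)) volume 0 1 := by
    simpa [hc.ne', add_comm] using (hg.comp_add_right a).comp_mul_left (c := c)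
  rw [hsub]
  gcongr
  calc ∫ t in (0:ℝ)..1, g (c * t + a) ≤ ∫ t in (0:ℝ)..1, (1 - t) * U + t * V := by
        refine integral_mono_on zero_le_one hgt
          ((by fun_prop : Continuous _).intervalIntegrable _ _) fun t ht => ?_
        simpa [mul_comm, add_comm] using hle t ht
    _ = (U + V) / 2 := by
        rw [intervalIntegral.integral_add ((by fun_prop : Continuous _).intervalIntegrable _ _)
          ((by fun_prop : Continuous _).intervalIntegrable _ _)]
        simp only [intervalIntegral.integral_mul_const, integral_comp_sub_left fun x => x, sub_self,
          sub_zero, integral_id, one_pow, ne_eq, OfNat.ofNat_ne_zero, not_false_eq_true, zero_pow]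
        ring

theorem trapezoid_holder_constant {c p S : ℝ} (hc : 0 < c) (hp : 0 < p) (hS : 0 ≤ S) :
    1 / c * ((c ^ (p + 1) / (2 ^ p * (p + 1))) ^ (1 / p) * (c * S) ^ ((p - 1) / p)) =
      c / (2 * (p + 1) ^ (1 / p)) * S ^ ((p - 1) / p) := by
  have hexp : (p + 1) * (1 / p) + (p - 1) / p = 2 := by field_simp; ring
  have hcc : c ^ ((p + 1) * (1 / p)) * c ^ ((p - 1) / p) = c ^ 2 := by
    rw [← Real.rpow_add hc, hexp, Real.rpow_two]
  rw [Real.div_rpow (by positivity) (by positivity), Real.mul_rpow (by positivity) (by positivity),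
    Real.mul_rpow hc.le hS, ← Real.rpow_mul hc.le, ← Real.rpow_mul zero_le_two,
    mul_one_div_cancel hp.ne', Real.rpow_one]
  have : (0:ℝ) < (p + 1) ^ (1 / p) := by positivity
  rw [show ∀ x y z : ℝ, 1 / c * (x / (2 * (p + 1) ^ (1 / p)) * (y * z)) =
    x * y / (c * (2 * (p + 1) ^ (1 / p))) * z from fun x y z => by ring, hcc]
  field_simp

theorem phi_convex_trapezoid_holder (a c A B p : ℝ) (hc : 0 < c) (hp : 1 < p)
    (hA : 0 ≤ A) (hB : 0 ≤ B) (f f' : ℝ → ℝ)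
    (hf : ∀ x ∈ Set.Icc a (a + c), HasDerivAt f (f' x) x)
    (hint : IntervalIntegrable f' volume a (a + c))
    (hbound : ∀ t ∈ Set.Icc (0:ℝ) 1,
      |f' (a + t * c)| ^ (p / (p - 1)) ≤ (1 - t) * A ^ (p / (p - 1)) + t * B ^ (p / (p - 1))) :
    |(1 / c) * (∫ x in a..(a + c), f x) - (f a + f (a + c)) / 2| ≤
      (c / (2 * (p + 1) ^ (1 / p))) *
        ((A ^ (p / (p - 1)) + B ^ (p / (p - 1))) / 2) ^ ((p - 1) / p) := by
  set q := p / (p - 1)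
  have hpq : p.HolderConjugate q := Real.HolderConjugate.conjExponent hp
  have hac : a ≤ a + c := by linarith
  have herror : (1 / c) * (∫ x in a..(a + c), f x) - (f a + f (a + c)) / 2 =
      -(1 / c) * ∫ x in a..(a + c), (x - (a + (a + c)) / 2) * f' x := by
    rw [integral_sub_midpoint_mul_deriv (by rwa [uIcc_of_le hac]) hint]
    field_simp
    ring
  have hf'_Lq : MemLp f' (ENNReal.ofReal q) (volume.restrict (Ioc a (a + c))) :=
    .of_bound hint.1.aestronglyMeasurable (max A B) <| (ae_restrict_mem measurableSet_Ioc).mono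
      fun x hx => abs_le_max_of_rpow_abs_le_convexComb hc hA hB hpq.symm.pos hbound x
        (Ioc_subset_Icc_self hx)
  have hf'_int : ∫ x in a..(a + c), |f' x| ^ q ≤ c * ((A ^ q + B ^ q) / 2) :=
    integral_le_of_le_convexComb hc (hf'_Lq.intervalIntegrable_abs_rpow hac hpq.symm.pos) hbound
  have hS : 0 ≤ (A ^ q + B ^ q) / 2 := by positivity
  rw [herror, abs_mul, abs_neg, abs_of_pos (one_div_pos.2 hc),
    ← trapezoid_holder_constant hc hpq.pos hS]
  gcongr
  calc |∫ x in a..(a + c), (x - (a + (a + c)) / 2) * f' x|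
      ≤ (∫ x in a..(a + c), |x - (a + (a + c)) / 2| ^ p) ^ (1 / p) *
          (∫ x in a..(a + c), |f' x| ^ q) ^ (1 / q) :=
        abs_intervalIntegral_mul_le_Lp_mul_Lq hac hpq (memLp_sub_const_restrict_Ioc _ _ _ _) hf'_Lq
    _ ≤ (c ^ (p + 1) / (2 ^ p * (p + 1))) ^ (1 / p) * (c * ((A ^ q + B ^ q) / 2)) ^ (1 / q) := by
        rw [integral_abs_sub_midpoint_rpow hac hpq.nonneg, add_sub_cancel_left]
        gcongr
        exact intervalIntegral.integral_nonneg hac fun x _ => by positivity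
    _ = _ := by rw [one_div_div]
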